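/- arXiv:1304.7707 — 2 statements merged into one kernel-verified Lean document; each statement's English description precedes it below -/
import Mathlib

section
/- Let 0 → U →ⁱ X →ᵖ Y → 0 be a short exact sequence of left R-modules, let g : U → V be R-linear, and let (Q, q : X → Q, j : V → Q) be the pushout of i along g (so j ∘ g = q ∘ i and the square is a pushout in the category of R-modules); let π : Q → Y be the induced map with π ∘ q = p and π ∘ j = 0, so that 0 → V →ʲ Q →^π Y → 0 is exact. Let f : M → N and φ : N → Y be R-linear and assume Ext¹(φ ∘ f, g) = 0. Then there exists an R-linear map α : M → Q with π ∘ α = φ ∘ f. -/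
universe u

open CategoryTheory

attribute [local instance] HasDerivedCategory.standard

noncomputable instance hasExtModuleCat (R : Type u) [Ring R] :
    HasExt.{u + 1} (ModuleCat.{u} R) :=
  hasExt_of_hasDerivedCategory _

/-- `Ext¹(f, g) = 0`: the induced map `Ext¹(N, U) → Ext¹(M, V)`, sending the class of an
extension of `U` by `N` to the class obtained by pulling back along `f` and pushing out
along `g` (i.e. the Yoneda composite with `f` on the right and `g` on the left), is the
zero map. -/
def ExtVanish (R : Type u) [Ring R] {M N U V : Type u}
    [AddCommGroup M] [Module R M] [AddCommGroup N] [Module R N]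
    [AddCommGroup U] [Module R U] [AddCommGroup V] [Module R V]
    (f : M →ₗ[R] N) (g : U →ₗ[R] V) : Prop :=
  ∀ ε : Abelian.Ext.{u + 1} (ModuleCat.of R N) (ModuleCat.of R U) 1,
    ((Abelian.Ext.mk₀ (ModuleCat.ofHom f)).comp ε (zero_add 1)).comp
      (Abelian.Ext.mk₀ (ModuleCat.ofHom g)) (add_zero 1) = 0

/-! The sequence `0 → V → Q → Y → 0` receives the morphism `(g, q, 𝟙 Y)` from
`0 → U → X → Y → 0`, so by naturality its class is `e ∘ g`, where `e` is the class of the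
original sequence. Pulling back along `φ ∘ f` kills it by hypothesis, and the long exact
sequence of `Ext(M, -)` then lifts `φ ∘ f` through `π`. -/

universe w

open Abelian

lemma CategoryTheory.ShortComplex.ShortExact.exists_lift_of_mk₀_comp_extClass_eq_zero
    {C : Type*} [Category C] [Abelian C] [HasExt.{w} C]
    {S : ShortComplex C} (hS : S.ShortExact) {X : C} (ψ : X ⟶ S.X₃)
    (hψ : (Ext.mk₀ ψ).comp hS.extClass (zero_add 1) = 0) :
    ∃ α : X ⟶ S.X₂, α ≫ S.g = ψ := by
  obtain ⟨x, hx⟩ := Ext.covariant_sequence_exact₃ X hS (Ext.mk₀ ψ) (zero_add 1) hψ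
  refine ⟨Ext.homEquiv₀ x, (Ext.mk₀_bijective _ _).injective ?_⟩
  rw [← Ext.mk₀_comp_mk₀, Ext.mk₀_homEquiv₀_apply, hx]

theorem stmt2_general {R : Type u} [Ring R] {U X Y V Q M N : Type u}
    [AddCommGroup U] [Module R U] [AddCommGroup X] [Module R X]
    [AddCommGroup Y] [Module R Y] [AddCommGroup V] [Module R V]
    [AddCommGroup Q] [Module R Q] [AddCommGroup M] [Module R M]
    [AddCommGroup N] [Module R N]
    (i : U →ₗ[R] X) (p : X →ₗ[R] Y)
    (hi : Function.Injective i) (hexact : LinearMap.range i = LinearMap.ker p)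
    (hp : Function.Surjective p)
    (g : U →ₗ[R] V) (q : X →ₗ[R] Q) (j : V →ₗ[R] Q)
    (hcomm : j ∘ₗ g = q ∘ₗ i)
    (π : Q →ₗ[R] Y) (hπq : π ∘ₗ q = p)
    (hj : Function.Injective j) (hexact' : LinearMap.range j = LinearMap.ker π)
    (hπ : Function.Surjective π)
    (f : M →ₗ[R] N) (φ : N →ₗ[R] Y)
    (hext : ExtVanish R (φ ∘ₗ f) g) :
    ∃ α : M →ₗ[R] Q, π ∘ₗ α = φ ∘ₗ f := by
  have hip : Function.Exact i p := LinearMap.exact_iff.mpr hexact.symm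
  have hjπ : Function.Exact j π := LinearMap.exact_iff.mpr hexact'.symm
  let S := ModuleCat.shortComplexOfCompEqZero i p hip.linearMap_comp_eq_zero
  let S' := ModuleCat.shortComplexOfCompEqZero j π hjπ.linearMap_comp_eq_zero
  have hS : S.ShortExact := ModuleCat.shortComplex_shortExact S hip hi hp
  have hS' : S'.ShortExact := ModuleCat.shortComplex_shortExact S' hjπ hj hπ
  let Φ : S ⟶ S' :=
    { τ₁ := ModuleCat.ofHom g
      τ₂ := ModuleCat.ofHom q
      τ₃ := 𝟙 _
      comm₁₂ := ModuleCat.hom_ext hcomm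
      comm₂₃ := ModuleCat.hom_ext hπq }
  have hclass : hS'.extClass = hS.extClass.comp (Ext.mk₀ (ModuleCat.ofHom g)) (add_zero 1) := by
    simpa [Φ] using (hS.extClass_naturality hS' Φ).symm
  have hvanish :
      (Ext.mk₀ (ModuleCat.ofHom (φ ∘ₗ f))).comp hS'.extClass (zero_add 1) = 0 := by
    rw [hclass, ← Ext.comp_assoc_of_third_deg_zero]
    exact hext hS.extClass
  obtain ⟨α, hα⟩ := hS'.exists_lift_of_mk₀_comp_extClass_eq_zero _ hvanish
  exact ⟨α.hom, congrArg ModuleCat.Hom.hom hα⟩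

theorem stmt2 {R : Type u} [Ring R] {U X Y V Q M N : Type u}
    [AddCommGroup U] [Module R U] [AddCommGroup X] [Module R X]
    [AddCommGroup Y] [Module R Y] [AddCommGroup V] [Module R V]
    [AddCommGroup Q] [Module R Q] [AddCommGroup M] [Module R M]
    [AddCommGroup N] [Module R N]
    (i : U →ₗ[R] X) (p : X →ₗ[R] Y)
    (hi : Function.Injective i) (hexact : LinearMap.range i = LinearMap.ker p)
    (hp : Function.Surjective p)
    (g : U →ₗ[R] V) (q : X →ₗ[R] Q) (j : V →ₗ[R] Q)
    (hcomm : j ∘ₗ g = q ∘ₗ i)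
    (hpushout : ∀ (T : Type u) [AddCommGroup T] [Module R T]
      (a : V →ₗ[R] T) (b : X →ₗ[R] T), a ∘ₗ g = b ∘ₗ i →
        ∃! c : Q →ₗ[R] T, c ∘ₗ j = a ∧ c ∘ₗ q = b)
    (π : Q →ₗ[R] Y) (hπq : π ∘ₗ q = p) (hπj : π ∘ₗ j = 0)
    (hj : Function.Injective j) (hexact' : LinearMap.range j = LinearMap.ker π)
    (hπ : Function.Surjective π)
    (f : M →ₗ[R] N) (φ : N →ₗ[R] Y)
    (hext : ExtVanish R (φ ∘ₗ f) g) :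
    ∃ α : M →ₗ[R] Q, π ∘ₗ α = φ ∘ₗ f :=
  stmt2_general i p hi hexact hp g q j hcomm π hπq hj hexact' hπ f φ hext
end

section
/- Let R be a ring, f : M → N a homomorphism of left R-modules, and V a left R-module. Let H = Hom_R(N, V) and let α : ⨁_{g ∈ H} M → V be the R-linear map defined on the direct sum of copies of M indexed by H by α((x_g)_{g ∈ H}) = Σ_{g ∈ H} g(f(x_g)). Then for every index set J and every R-linear map h : ⨁_{j ∈ J} N → V there exists an R-linear map β : ⨁_{j ∈ J} M → ⨁_{g ∈ H} M such that α ∘ β = h ∘ (⨁_{j ∈ J} f), where ⨁_{j ∈ J} f : ⨁_{j ∈ J} M → ⨁_{j ∈ J} N acts as f in each coordinate. (Hence α is a precover of V for the closure under direct sums of the ideal generated by f.) -/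
/-!
Each restriction `h ∘ ι_j : N → V` of `h` to a summand is itself an element of `H = Hom(N, V)`,
so `β` sends the `j`-th copy of `M` identically onto the copy of `M` indexed by `h ∘ ι_j`;
on that copy `α` acts as `(h ∘ ι_j) ∘ f`.
-/

universe u

open DirectSum

attribute [local instance] Classical.decEq

namespace DirectSum

variable {R : Type*} [Semiring R] {I J : Type*} [DecidableEq I] [DecidableEq J]
  {V : Type*} [AddCommMonoid V] [Module R V]

theorem toModule_comp_toModule_lof (M : I → Type*) [∀ i, AddCommMonoid (M i)]
    [∀ i, Module R (M i)] (F : ∀ i, M i →ₗ[R] V) (φ : J → I) :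
    toModule R I V F ∘ₗ toModule R J (⨁ i, M i) (fun j => lof R I M (φ j)) =
      toModule R J V (fun j => F (φ j)) := by
  ext j x
  simp

theorem comp_lmap_eq_toModule {M N : J → Type*} [∀ j, AddCommMonoid (M j)]
    [∀ j, Module R (M j)] [∀ j, AddCommMonoid (N j)] [∀ j, Module R (N j)]
    (f : ∀ j, M j →ₗ[R] N j) (h : (⨁ j, N j) →ₗ[R] V) :
    h ∘ₗ lmap f = toModule R J V (fun j => h ∘ₗ lof R J N j ∘ₗ f j) := by
  ext j x
  simp

end DirectSum

theorem stmt10 {R : Type u} [Ring R] {M N V : Type u}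
    [AddCommGroup M] [Module R M] [AddCommGroup N] [Module R N]
    [AddCommGroup V] [Module R V] (f : M →ₗ[R] N)
    (α : (⨁ _ : (N →ₗ[R] V), M) →ₗ[R] V)
    (hα : α = DirectSum.toModule R (N →ₗ[R] V) V fun g => g ∘ₗ f)
    (J : Type u) (h : (⨁ _ : J, N) →ₗ[R] V) :
    ∃ β : (⨁ _ : J, M) →ₗ[R] (⨁ _ : (N →ₗ[R] V), M),
      α ∘ₗ β = h ∘ₗ (DFinsupp.mapRange.linearMap fun _ : J => f) := by
  subst hα
  exact ⟨toModule R J _ fun j => lof R _ (fun _ => M) (h ∘ₗ lof R J (fun _ => N) j),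
    (toModule_comp_toModule_lof _ _ _).trans (comp_lmap_eq_toModule _ h).symm⟩
end
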